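/- arXiv:2311.03593 — 3 statements merged into one kernel-verified Lean document; each statement's English description precedes it below -/
import Mathlib

section
/- Let Q̃ be the N×N matrix obtained from the transposed generator of a strongly ergodic continuous-time Markov chain on states 1,…,N+1 (with N+1 reachable only from N, via rate Q_{N,N+1} > 0) by deleting the row and column of the absorbing state N+1. Then 0 is not an eigenvalue of Q̃. -/
open Matrix

lemma aux_no_kernel (n : ℕ)
    (G : Matrix (Fin (n + 1)) (Fin (n + 1)) ℝ) (q : ℝ)
    (hoff : ∀ i j, i ≠ j → 0 ≤ G i j)
    (hrow : ∀ i, ∑ j, G i j = 0)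
    (hconn : ∀ i j : Fin (n + 1), Relation.ReflTransGen (fun a b => a ≠ b ∧ 0 < G a b) i j)
    (hq : 0 < q) (x : Fin (n + 1) → ℝ)
    (hx : ∀ i, ∑ j, G i j * x j = (if i = Fin.last n then q * x (Fin.last n) else 0))
    (i0 : Fin (n + 1)) (hmax : ∀ j, x j ≤ x i0) (hpos : 0 < x i0) : False := by
  -- basic computation for any i with x i = x i0
  have hsum : ∀ i : Fin (n + 1), x i = x i0 →
      ∑ j, G i j * (x i0 - x j)
        = - (if i = Fin.last n then q * x (Fin.last n) else 0) := by
    intro i hi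
    have : ∑ j, G i j * (x i0 - x j) = (∑ j, G i j) * x i0 - ∑ j, G i j * x j := by
      rw [Finset.sum_mul, ← Finset.sum_sub_distrib]
      congr 1; ext j; ring
    rw [this, hrow, hx]; ring
  have hterm : ∀ i : Fin (n + 1), x i = x i0 → ∀ j, 0 ≤ G i j * (x i0 - x j) := by
    intro i hi j
    rcases eq_or_ne j i with rfl | hji
    · rw [hi]; simp
    · exact mul_nonneg (hoff i j (Ne.symm hji)) (by linarith [hmax j])
  -- x at last equal to max gives contradiction
  have hlast : x (Fin.last n) = x i0 → False := by
    intro hl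
    have h1 : 0 ≤ ∑ j, G (Fin.last n) j * (x i0 - x j) :=
      Finset.sum_nonneg fun j _ => hterm _ hl j
    have h2 := hsum _ hl
    rw [if_pos rfl, hl] at h2
    nlinarith
  -- propagation of maximality
  have hprop : ∀ i : Fin (n + 1), x i = x i0 → i ≠ Fin.last n →
      ∀ j, 0 < G i j → x j = x i0 := by
    intro i hi hne j hGij
    have h2 := hsum _ hi
    rw [if_neg hne] at h2
    have := (Finset.sum_eq_zero_iff_of_nonneg (fun j _ => hterm _ hi j)).mp
      (by rw [h2]; ring) j (Finset.mem_univ j)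
    have h3 : x i0 - x j = 0 := by
      rcases mul_eq_zero.mp this with h | h
      · exact absurd h (ne_of_gt hGij)
      · exact h
    linarith [hmax j]
  have hreach : ∀ b, Relation.ReflTransGen (fun a b => a ≠ b ∧ 0 < G a b) i0 b →
      x b = x i0 := by
    intro b hb
    induction hb with
    | refl => rfl
    | tail h step ih =>
      rcases eq_or_ne _ (Fin.last n) with he | he
      · exact absurd (he ▸ ih) hlast
      · exact hprop _ ih he _ step.2
  exact hlast (hreach _ (hconn i0 (Fin.last n)))

/-- Let `G` be the generator of a strongly ergodic continuous-time Markov chain on `N`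
states (zero row sums, nonnegative off-diagonal entries, strongly connected transition
graph), and let `Q̃` be its transpose with the escape rate `q = Q_{N,N+1} > 0` subtracted
from the `(N,N)` entry.  Then `0` is not an eigenvalue of `Q̃`. -/
theorem zero_not_eigenvalue_of_strongly_ergodic (n : ℕ)
    (G : Matrix (Fin (n + 1)) (Fin (n + 1)) ℝ) (q : ℝ)
    (hoff : ∀ i j, i ≠ j → 0 ≤ G i j)
    (hrow : ∀ i, ∑ j, G i j = 0)
    (hconn : ∀ i j : Fin (n + 1), Relation.ReflTransGen (fun a b => a ≠ b ∧ 0 < G a b) i j)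
    (hq : 0 < q) :
    ¬ Module.End.HasEigenvalue
      (Matrix.toLin' (Matrix.of fun i j : Fin (n + 1) =>
        G j i - (if i = Fin.last n ∧ j = Fin.last n then q else 0))) 0 := by
  intro hev
  set M : Matrix (Fin (n + 1)) (Fin (n + 1)) ℝ :=
    Matrix.of fun i j : Fin (n + 1) =>
      G j i - (if i = Fin.last n ∧ j = Fin.last n then q else 0) with hM
  obtain ⟨v, hv⟩ := hev.exists_hasEigenvector
  have hv0 : v ≠ 0 := hv.right
  have hMv : M.mulVec v = 0 := by
    have := hv.apply_eq_smul
    simpa [Matrix.toLin'_apply] using this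
  have hdet : M.det = 0 := (Matrix.exists_mulVec_eq_zero_iff).mp ⟨v, hv0, hMv⟩
  have hdetT : Mᵀ.det = 0 := by rw [Matrix.det_transpose]; exact hdet
  obtain ⟨y, hy0, hy⟩ := (Matrix.exists_mulVec_eq_zero_iff).mpr hdetT
  -- rewrite kernel condition
  have hx : ∀ i, ∑ j, G i j * y j = (if i = Fin.last n then q * y (Fin.last n) else 0) := by
    intro i
    have h := congrFun hy i
    simp only [Matrix.mulVec, dotProduct, Matrix.transpose_apply, hM,
      Matrix.of_apply, Pi.zero_apply] at h
    have h2 : ∑ j, (G i j * y j - (if j = Fin.last n ∧ i = Fin.last n then q else 0) * y j)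
        = 0 := by
      simpa [sub_mul] using h
    rw [Finset.sum_sub_distrib] at h2
    have h3 : ∑ j, (if j = Fin.last n ∧ i = Fin.last n then q else 0) * y j
        = (if i = Fin.last n then q * y (Fin.last n) else 0) := by
      rcases eq_or_ne i (Fin.last n) with rfl | hne
      · simp [Finset.sum_ite_eq']
      · simp [hne]
    rw [h3] at h2
    linarith
  -- negation also in kernel
  have hx' : ∀ i, ∑ j, G i j * (-y) j
      = (if i = Fin.last n then q * (-y) (Fin.last n) else 0) := by
    intro i
    have h0 : ∑ j, G i j * (-y) j = -∑ j, G i j * y j := by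
      simp [Finset.sum_neg_distrib, mul_neg]
    rw [h0, hx i]
    rcases eq_or_ne i (Fin.last n) with rfl | hne
    · simp
    · simp [hne]
  obtain ⟨i0, _, hmax⟩ := Finset.exists_max_image Finset.univ y ⟨Fin.last n, Finset.mem_univ _⟩
  rcases lt_or_ge 0 (y i0) with hpos | hnp
  · exact aux_no_kernel n G q hoff hrow hconn hq y hx i0 (fun j => hmax j (Finset.mem_univ j)) hpos
  · obtain ⟨i1, _, hmax1⟩ := Finset.exists_max_image Finset.univ (-y)
      ⟨Fin.last n, Finset.mem_univ _⟩
    have : ∃ j, y j ≠ 0 := by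
      by_contra h
      push_neg at h
      exact hy0 (funext h)
    obtain ⟨j, hj⟩ := this
    have hjneg : y j < 0 := lt_of_le_of_ne (le_trans (hmax j (Finset.mem_univ j)) hnp) hj
    have hpos1 : 0 < (-y) i1 :=
      lt_of_lt_of_le (by simpa using hjneg) (hmax1 j (Finset.mem_univ j))
    exact aux_no_kernel n G q hoff hrow hconn hq (-y) hx' i1 (fun k => hmax1 k (Finset.mem_univ k)) hpos1
end

section
/- Consider the three-state model M2 with generator Q̃ᵀ on states {1,2,3} given by transitions 1→3 at rate k₁, 3→1 at rate k₃, 2→3 at rate k₂, 3→2 at rate k₄, and absorption from 3 at rate k₅. Given target values L₁, L₂, L₃, S₁, S₂ satisfying L₁S₁S₂ − L₂S₁² + L₃S₁ − S₂² ≠ 0, S₁³ − S₁S₂ ≠ 0, and S₂ ≠ 0, the system −S₁ = k₅, −S₂ = k₅(L₁+k₁+k₂+k₃), L₁ = −k₁−k₂−k₃−k₄−k₅, L₂ = k₁k₄+k₁k₅+k₂k₃+k₂k₅+k₃k₄+k₃k₅, L₃ = −k₂k₃k₅ has the unique solution k₅ = −S₁, k₄ = (S₁²−S₂)/S₁, k₂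 = (L₁S₁S₂−L₂S₁²+L₃S₁−S₂²)/(S₁³−S₁S₂), k₃ = (S₁²−S₂)L₃/(L₁S₁S₂−L₂S₁²+L₃S₁−S₂²), and k₁ determined linearly by the first equation of the simple system. -/
/-- Inverse problem for the three-state model M2: under the genericity conditions
`L₁S₁S₂ − L₂S₁² + L₃S₁ − S₂² ≠ 0`, `S₁³ − S₁S₂ ≠ 0`, `S₂ ≠ 0`, the symmetrized system
has the unique solution given by the displayed rational formulas (with `k₁` determined
linearly from the remaining rates). -/
theorem model2_inverse_unique (k1 k2 k3 k4 k5 L1 L2 L3 S1 S2 : ℝ)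
    (hc1 : L1 * S1 * S2 - L2 * S1 ^ 2 + L3 * S1 - S2 ^ 2 ≠ 0)
    (hc2 : S1 ^ 3 - S1 * S2 ≠ 0)
    (hc3 : S2 ≠ 0)
    (e1 : -S1 = k5)
    (e2 : -S2 = k5 * (L1 + k1 + k2 + k3))
    (e3 : L1 = -k1 - k2 - k3 - k4 - k5)
    (e4 : L2 = k1 * k4 + k1 * k5 + k2 * k3 + k2 * k5 + k3 * k4 + k3 * k5)
    (e5 : L3 = -k2 * k3 * k5) :
    k5 = -S1 ∧
    k4 = (S1 ^ 2 - S2) / S1 ∧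
    k2 = (L1 * S1 * S2 - L2 * S1 ^ 2 + L3 * S1 - S2 ^ 2) / (S1 ^ 3 - S1 * S2) ∧
    k3 = (S1 ^ 2 - S2) * L3 / (L1 * S1 * S2 - L2 * S1 ^ 2 + L3 * S1 - S2 ^ 2) ∧
    k1 = -L1 - k2 - k3 - k4 - k5 := by
  subst e1
  have hS1 : S1 ≠ 0 := fun h => hc2 (by rw [h]; ring)
  have hσ : S1 * (L1 + k1 + k2 + k3) = S2 := by linear_combination e2
  have hk23 : S1 * (k2 * k3) = L3 := by linear_combination -e5
  have hk2 : k2 * (S1 ^ 3 - S1 * S2)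
      = L1 * S1 * S2 - L2 * S1 ^ 2 + L3 * S1 - S2 ^ 2 := by
    linear_combination (-(S1 * (k1 + k3)) - S2) * hσ + S1 * hk23
      + S1 ^ 2 * (k1 + k3) * e3 + S1 ^ 2 * e4
  refine ⟨rfl, ?_, ?_, ?_, by linarith⟩
  · field_simp
    linear_combination S1 * e3 - e2
  · rw [eq_div_iff hc2]
    exact hk2
  · rw [eq_div_iff hc1]
    linear_combination (-k3) * hk2 + (S1 ^ 2 - S2) * hk23
end

section
/- For the M9 symmetrized inverse system (equations −S₁ = k₅, −S₂ = k₅(k₁+k₂+L₁), L₁ = −Σkᵢ, L₃ = −k₁k₂k₅, L₂ = k₁k₂+k₁k₄+k₁k₅+k₂k₃+k₂k₅), with S₁ ≠ 0, L₃ ≠ 0, and D := (L₁S₁−S₂)² − 4L₃S₁ > 0, the explicit formulas k₅ = −S₁, k₁ = −(L₁S₁ − S₂ + √D)/(2S₁), k₂ = −(L₁S₁ − S₂ − √D)/(2S₁), together with the corresponding expressions for k₃ and k₄, satisfy all five equations, and swapping the choice of sign in front of √D yields the second solution obtained from the first by exchanging k₁↔k₂ and k₃↔k₄. -/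
/-!
With `k₅ = −S₁`, the second and fourth equations say that `k₁ + k₂ = −(L₁S₁ − S₂)/S₁` and
`k₁k₂ = L₃/S₁`, so `k₁, k₂` are the roots of `S₁x² + (L₁S₁ − S₂)x + L₃`, whose
discriminant is `D`. Given `k₁, k₂`, the third and fifth equations are linear in `k₃, k₄`:
the third fixes `k₃ + k₄`, and the fifth fixes `(k₁ − k₂)(k₄ − k₃)`, where
`k₁ − k₂ = −√D/S₁ ≠ 0`. Every equation is symmetric under `k₁ ↔ k₂, k₃ ↔ k₄`, which gives
the second solution.
-/
/-- The five equations of the M9 symmetrized inverse system. -/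
def M9System (k1 k2 k3 k4 k5 L1 L2 L3 S1 S2 : ℝ) : Prop :=
  (-S1 = k5) ∧
  (-S2 = k5 * (k1 + k2 + L1)) ∧
  (L1 = -k1 - k2 - k3 - k4 - k5) ∧
  (L3 = -k1 * k2 * k5) ∧
  (L2 = k1 * k2 + k1 * k4 + k1 * k5 + k2 * k3 + k2 * k5)

section Field

variable {K : Type*} [Field K] [NeZero (2 : K)]

theorem mul_add_and_mul_sub_of_eq_div_two_mul {a p q x y : K} (ha : a ≠ 0)
    (hx : x = (p - q) / (2 * a)) (hy : y = (p + q) / (2 * a)) :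
    a * (x + y) = p ∧ a * (y - x) = q := by
  subst hx hy
  constructor <;> field_simp <;> ring

theorem mul_mul_eq_of_quadratic_formula {a b c s x y : K} (ha : a ≠ 0)
    (hsum : a * (x + y) = -b) (hdiff : a * (y - x) = s) (hs : s ^ 2 = b ^ 2 - 4 * a * c) :
    a * (x * y) = c := by
  refine mul_left_cancel₀ (mul_ne_zero (mul_ne_zero two_ne_zero two_ne_zero) ha) ?_
  linear_combination (a * (x + y) - b) * hsum - (a * (y - x) + s) * hdiff - hs

end Field

theorem M9System.of_vieta {k1 k2 k3 k4 k5 L1 L2 L3 S1 S2 : ℝ} (hS1 : S1 ≠ 0) (hk5 : k5 = -S1)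
    (hsum12 : S1 * (k1 + k2) = S2 - L1 * S1) (hprod12 : S1 * (k1 * k2) = L3)
    (hsum34 : S1 * (k3 + k4) = S1 ^ 2 - S2)
    (hcross : S1 ^ 2 * ((k1 - k2) * (k4 - k3)) =
      -(L1 * S1 ^ 3 - S1 ^ 2 * S2 - 2 * L2 * S1 ^ 2 + L1 * S1 * S2 + 2 * L3 * S1 - S2 ^ 2)) :
    M9System k1 k2 k3 k4 k5 L1 L2 L3 S1 S2 := by
  subst hk5
  refine ⟨rfl, by linear_combination hsum12, ?_, by linear_combination -hprod12, ?_⟩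
  · refine mul_left_cancel₀ hS1 ?_
    linear_combination hsum12 + hsum34
  · -- `2 (k₁k₄ + k₂k₃) = (k₁ + k₂)(k₃ + k₄) + (k₁ − k₂)(k₄ − k₃)`
    refine mul_left_cancel₀ (pow_ne_zero 2 hS1) ?_
    linear_combination -(S1 * hprod12 + (S1 * (k3 + k4) / 2 - S1 ^ 2) * hsum12 +
      (S2 - L1 * S1) / 2 * hsum34 + hcross / 2)

theorem M9System.swap {k1 k2 k3 k4 k5 L1 L2 L3 S1 S2 : ℝ}
    (h : M9System k1 k2 k3 k4 k5 L1 L2 L3 S1 S2) :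
    M9System k2 k1 k4 k3 k5 L1 L2 L3 S1 S2 := by
  obtain ⟨h1, h2, h3, h4, h5⟩ := h
  exact ⟨h1, by linear_combination h2, by linear_combination h3, by linear_combination h4,
    by linear_combination h5⟩

theorem model9_explicit_solutions_general (L1 L2 L3 S1 S2 k1 k2 k3 k4 k5 : ℝ)
    (hS1 : S1 ≠ 0)
    (hdisc : 0 < (L1 * S1 - S2) ^ 2 - 4 * L3 * S1)
    (hk5 : k5 = -S1)
    (hk1 : k1 = -(L1 * S1 - S2 + Real.sqrt ((L1 * S1 - S2) ^ 2 - 4 * L3 * S1)) / (2 * S1))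
    (hk2 : k2 = -(L1 * S1 - S2 - Real.sqrt ((L1 * S1 - S2) ^ 2 - 4 * L3 * S1)) / (2 * S1))
    (hk3 : k3 = (S1 ^ 2 - S2 -
        (L1 * S1 ^ 3 - S1 ^ 2 * S2 - 2 * L2 * S1 ^ 2 + L1 * S1 * S2 + 2 * L3 * S1 - S2 ^ 2) /
          Real.sqrt ((L1 * S1 - S2) ^ 2 - 4 * L3 * S1)) / (2 * S1))
    (hk4 : k4 = (S1 ^ 2 - S2 +
        (L1 * S1 ^ 3 - S1 ^ 2 * S2 - 2 * L2 * S1 ^ 2 + L1 * S1 * S2 + 2 * L3 * S1 - S2 ^ 2) /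
          Real.sqrt ((L1 * S1 - S2) ^ 2 - 4 * L3 * S1)) / (2 * S1)) :
    M9System k1 k2 k3 k4 k5 L1 L2 L3 S1 S2 ∧
    M9System k2 k1 k4 k3 k5 L1 L2 L3 S1 S2 := by
  set s := Real.sqrt ((L1 * S1 - S2) ^ 2 - 4 * L3 * S1)
  set N := L1 * S1 ^ 3 - S1 ^ 2 * S2 - 2 * L2 * S1 ^ 2 + L1 * S1 * S2 + 2 * L3 * S1 - S2 ^ 2
  have hs : s ^ 2 = (L1 * S1 - S2) ^ 2 - 4 * L3 * S1 := Real.sq_sqrt hdisc.le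
  have hs0 : s ≠ 0 := (Real.sqrt_pos.mpr hdisc).ne'
  obtain ⟨hsum12, hdiff12⟩ := mul_add_and_mul_sub_of_eq_div_two_mul (p := S2 - L1 * S1) (q := s)
    hS1 (hk1.trans (by ring)) (hk2.trans (by ring))
  obtain ⟨hsum34, hdiff34⟩ := mul_add_and_mul_sub_of_eq_div_two_mul hS1 hk3 hk4
  have hprod12 : S1 * (k1 * k2) = L3 :=
    mul_mul_eq_of_quadratic_formula (b := L1 * S1 - S2) hS1 (hsum12.trans (by ring)) hdiff12
      (by rw [hs]; ring)
  have hcross : S1 ^ 2 * ((k1 - k2) * (k4 - k3)) = -N :=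
    calc S1 ^ 2 * ((k1 - k2) * (k4 - k3)) = -(S1 * (k2 - k1) * (S1 * (k4 - k3))) := by ring
      _ = -N := by rw [hdiff12, hdiff34, mul_div_cancel₀ _ hs0]
  have h := M9System.of_vieta hS1 hk5 hsum12 hprod12 hsum34 hcross
  exact ⟨h, h.swap⟩

/-- Under `S₁ ≠ 0`, `L₃ ≠ 0` and positive discriminant `D = (L₁S₁−S₂)² − 4L₃S₁`, the
explicit formulas `k₅ = −S₁`, `k₁,₂ = −(L₁S₁−S₂ ± √D)/(2S₁)` together with the
corresponding expressions for `k₃, k₄` solve all five M9 equations, and swapping the sign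
of `√D` yields the second solution, obtained from the first by exchanging `k₁ ↔ k₂` and
`k₃ ↔ k₄`. -/
theorem model9_explicit_solutions (L1 L2 L3 S1 S2 k1 k2 k3 k4 k5 : ℝ)
    (hS1 : S1 ≠ 0) (hL3 : L3 ≠ 0)
    (hdisc : 0 < (L1 * S1 - S2) ^ 2 - 4 * L3 * S1)
    (hk5 : k5 = -S1)
    (hk1 : k1 = -(L1 * S1 - S2 + Real.sqrt ((L1 * S1 - S2) ^ 2 - 4 * L3 * S1)) / (2 * S1))
    (hk2 : k2 = -(L1 * S1 - S2 - Real.sqrt ((L1 * S1 - S2) ^ 2 - 4 * L3 * S1)) / (2 * S1))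
    (hk3 : k3 = (S1 ^ 2 - S2 -
        (L1 * S1 ^ 3 - S1 ^ 2 * S2 - 2 * L2 * S1 ^ 2 + L1 * S1 * S2 + 2 * L3 * S1 - S2 ^ 2) /
          Real.sqrt ((L1 * S1 - S2) ^ 2 - 4 * L3 * S1)) / (2 * S1))
    (hk4 : k4 = (S1 ^ 2 - S2 +
        (L1 * S1 ^ 3 - S1 ^ 2 * S2 - 2 * L2 * S1 ^ 2 + L1 * S1 * S2 + 2 * L3 * S1 - S2 ^ 2) /
          Real.sqrt ((L1 * S1 - S2) ^ 2 - 4 * L3 * S1)) / (2 * S1)) :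
    M9System k1 k2 k3 k4 k5 L1 L2 L3 S1 S2 ∧
    M9System k2 k1 k4 k3 k5 L1 L2 L3 S1 S2 :=
  model9_explicit_solutions_general L1 L2 L3 S1 S2 k1 k2 k3 k4 k5 hS1 hdisc hk5 hk1 hk2 hk3 hk4
end
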